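/- Let N ∈ ℕ, δ > 0, F ∈ ℝ^{(N+1)×(N+1)}, L ∈ ℝ^{N+1}, and let Q ∈ ℝ^{(N+1)×(N+1)} be symmetric positive definite with QF + FᵀQ + 2δQ negative definite. Suppose C₀ ≥ 0 and e : [0,∞) → ℝ^{N+1} is continuously differentiable with ė(t) = F e(t) + L ζ(t) for all t ≥ 0, where ζ : [0,∞) → ℝ is continuous and |ζ(t)| ≤ C₀ e^{−δt}. Then there exists M > 0, depending only on N, δ, F, L, Q, such that |e(t)| ≤ M e^{−δt}(|e(0)| + C₀) for all t ≥ 0. -/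

import Mathlib

/-!
`V(e) = eᵀ Q e` is a Lyapunov function. Because `-(QF + FᵀQ + 2δQ)` is positive definite, not
merely semidefinite, it dominates `ε‖e‖²`; half of this margin absorbs the cross term
`ζ (LᵀQe + eᵀQL)` by Young's inequality and the other half is an extra decay rate `η > 0`, so
`V' ≤ -(2δ + η) V + K ζ² ≤ -(2δ + η) V + K C₀² e^{-2δt}`. Comparing with the solution of the
corresponding linear equation gives `V(t) ≤ e^{-2δt} (V(0) + K C₀² / η)`, and the equivalence of
`V` with `‖e‖²` turns this into the bound on `‖e(t)‖`.
-/

open Matrix Real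

section Calculus

variable {𝕜 : Type*} [NontriviallyNormedField 𝕜] {m n : Type*} [Fintype n]
  {f g : 𝕜 → n → 𝕜} {f' g' : n → 𝕜} {t : 𝕜}

theorem HasDerivAt.dotProduct (hf : HasDerivAt f f' t) (hg : HasDerivAt g g' t) :
    HasDerivAt (fun s => f s ⬝ᵥ g s) (f' ⬝ᵥ g t + f t ⬝ᵥ g') t :=
  (HasDerivAt.fun_sum fun i (_ : i ∈ Finset.univ) =>
    (hasDerivAt_pi.1 hf i).mul (hasDerivAt_pi.1 hg i)).congr_deriv
      (by rw [Finset.sum_add_distrib]; rfl)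

theorem HasDerivAt.mulVec (A : Matrix m n 𝕜) (hf : HasDerivAt f f' t) :
    HasDerivAt (fun s => A *ᵥ f s) (A *ᵥ f') t :=
  hasDerivAt_pi.2 fun i => ((hasDerivAt_const t (A i)).dotProduct hf).congr_deriv
    (by rw [zero_dotProduct, zero_add]; rfl)

end Calculus

theorem le_of_hasDerivAt_le_neg_mul_add_mul_exp {V V' : ℝ → ℝ} {a γ b : ℝ} (hγa : γ ≠ a)
    (hV : ∀ t, 0 ≤ t → HasDerivAt V (V' t) t)
    (hV' : ∀ t, 0 ≤ t → V' t ≤ -a * V t + b * exp (-γ * t)) {t : ℝ} (ht : 0 ≤ t) :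
    V t ≤ exp (-a * t) * V 0 + b / (a - γ) * (exp (-γ * t) - exp (-a * t)) := by
  have hsub : a - γ ≠ 0 := sub_ne_zero.2 hγa.symm
  -- `e^{as} V(s)` minus a primitive of its forcing term `b e^{(a-γ)s}`
  set h : ℝ → ℝ := fun s => exp (a * s) * V s - b / (a - γ) * exp ((a - γ) * s)
  have hh : ∀ s, 0 ≤ s → HasDerivAt h
      (exp (a * s) * (a * V s + V' s) - b * exp ((a - γ) * s)) s := fun s hs =>
    (((((hasDerivAt_id s).const_mul a).exp).mul (hV s hs)).sub
      ((((hasDerivAt_id s).const_mul (a - γ)).exp).const_mul _)).congr_deriv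
      (by simp only [id]; field_simp)
  have hanti : AntitoneOn h (Set.Ici 0) := by
    refine antitoneOn_of_hasDerivWithinAt_nonpos (convex_Ici 0)
      (fun s hs => (hh s hs).continuousAt.continuousWithinAt)
      (fun s hs => (hh s (interior_subset hs)).hasDerivWithinAt) fun s hs => ?_
    have hs : 0 ≤ s := interior_subset hs
    have hexp : exp (a * s) * exp (-γ * s) = exp ((a - γ) * s) := by
      rw [← exp_add]; ring_nf
    linear_combination mul_le_mul_of_nonneg_left (hV' s hs) (exp_pos (a * s)).le + b * hexp
  have key := mul_le_mul_of_nonneg_left (hanti Set.self_mem_Ici (Set.mem_Ici.2 ht) ht)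
    (exp_pos (-a * t)).le
  have h1 : exp (-a * t) * exp (a * t) = 1 := by rw [← exp_add]; simp
  have h2 : exp (-a * t) * exp ((a - γ) * t) = exp (-γ * t) := by rw [← exp_add]; ring_nf
  simp only [h, mul_zero, exp_zero, one_mul, mul_one] at key
  linear_combination key - V t * h1 + b / (a - γ) * h2

namespace Matrix

variable {m n : Type*} [Fintype m] [Fintype n]

theorem exists_pos_abs_dotProduct_mulVec_le (A : Matrix m n ℝ) :
    ∃ C > 0, ∀ v w, |v ⬝ᵥ A *ᵥ w| ≤ C * ‖v‖ * ‖w‖ := by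
  refine ⟨∑ i, ∑ j, |A i j| + 1, by positivity, fun v w => ?_⟩
  calc |v ⬝ᵥ A *ᵥ w| = |∑ i, ∑ j, v i * A i j * w j| := by
        simp only [dotProduct, mulVec, Finset.mul_sum, mul_assoc]
    _ ≤ ∑ i, ∑ j, |A i j| * ‖v‖ * ‖w‖ := by
        refine (Finset.abs_sum_le_sum_abs _ _).trans (Finset.sum_le_sum fun i _ =>
          (Finset.abs_sum_le_sum_abs _ _).trans (Finset.sum_le_sum fun j _ => ?_))
        rw [abs_mul, abs_mul, mul_comm |v i|, mul_assoc, mul_assoc]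
        gcongr
        exacts [norm_le_pi_norm v i, norm_le_pi_norm w j]
    _ ≤ (∑ i, ∑ j, |A i j| + 1) * ‖v‖ * ‖w‖ := by
        simp only [← Finset.sum_mul]
        gcongr
        linarith

theorem PosDef.exists_pos_mul_sq_norm_le {P : Matrix n n ℝ} (hP : P.PosDef) :
    ∃ c > 0, ∀ v, c * ‖v‖ ^ 2 ≤ v ⬝ᵥ P *ᵥ v := by
  rcases isEmpty_or_nonempty n with hn | hn
  · exact ⟨1, one_pos, fun v => by simp [Subsingleton.elim v 0]⟩
  have hcont : Continuous fun v : n → ℝ => v ⬝ᵥ P *ᵥ v := by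
    simp only [dotProduct, mulVec]
    fun_prop
  obtain ⟨u, hu, hmin⟩ := (isCompact_sphere (0 : n → ℝ) 1).exists_isMinOn
    (NormedSpace.sphere_nonempty.2 zero_le_one) hcont.continuousOn
  have hu0 : u ≠ 0 := by rintro rfl; simp at hu
  refine ⟨u ⬝ᵥ P *ᵥ u, by simpa using hP.dotProduct_mulVec_pos hu0, fun v => ?_⟩
  rcases eq_or_ne v 0 with rfl | hv
  · simp
  have hv' : 0 < ‖v‖ := norm_pos_iff.2 hv
  have := hmin (a := ‖v‖⁻¹ • v) (by simp [norm_smul, hv'.ne'])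
  simp only [Set.mem_ofPred_eq, mulVec_smul, smul_dotProduct, dotProduct_smul,
    smul_eq_mul] at this
  rw [← le_div_iff₀ (by positivity)]
  convert this using 1
  field_simp

end Matrix

section Lyapunov

variable {n : Type*} [Fintype n]

theorem exists_dissipation_bound_of_lyapunov {δ C : ℝ} {F Q : Matrix n n ℝ} (L : n → ℝ)
    (hC : 0 < C) (hQC : ∀ v w, |v ⬝ᵥ Q *ᵥ w| ≤ C * ‖v‖ * ‖w‖)
    (hLyap : (-(Q * F + Fᵀ * Q + (2 * δ) • Q)).PosDef) :
    ∃ η > 0, ∃ K ≥ 0, ∀ v z, (F *ᵥ v + z • L) ⬝ᵥ Q *ᵥ v + v ⬝ᵥ Q *ᵥ (F *ᵥ v + z • L) ≤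
      -(2 * δ + η) * (v ⬝ᵥ Q *ᵥ v) + K * z ^ 2 := by
  obtain ⟨ε, hε, hP⟩ := hLyap.exists_pos_mul_sq_norm_le
  refine ⟨ε / (2 * C), by positivity, 2 * (C * ‖L‖) ^ 2 / ε, by positivity, fun v z => ?_⟩
  have hsplit : (F *ᵥ v + z • L) ⬝ᵥ Q *ᵥ v + v ⬝ᵥ Q *ᵥ (F *ᵥ v + z • L) =
      -(v ⬝ᵥ (-(Q * F + Fᵀ * Q + (2 * δ) • Q)) *ᵥ v) - 2 * δ * (v ⬝ᵥ Q *ᵥ v) +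
        z * (L ⬝ᵥ Q *ᵥ v + v ⬝ᵥ Q *ᵥ L) := by
    simp only [add_dotProduct, dotProduct_add, mulVec_add, smul_dotProduct, mulVec_smul,
      dotProduct_smul, smul_eq_mul, neg_mulVec, add_mulVec, smul_mulVec, dotProduct_neg,
      ← mulVec_mulVec, dotProduct_mulVec _ Fᵀ, vecMul_transpose]
    ring
  have hcross : z * (L ⬝ᵥ Q *ᵥ v + v ⬝ᵥ Q *ᵥ L) ≤ |z| * (2 * C * ‖L‖ * ‖v‖) := by
    refine (le_abs_self _).trans ?_
    rw [abs_mul]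
    gcongr
    linarith [abs_add_le (L ⬝ᵥ Q *ᵥ v) (v ⬝ᵥ Q *ᵥ L), hQC L v, hQC v L]
  have hyoung : |z| * (2 * C * ‖L‖ * ‖v‖) ≤
      ε / 2 * ‖v‖ ^ 2 + 2 * (C * ‖L‖) ^ 2 / ε * z ^ 2 := by
    rw [← sq_abs z]
    field_simp
    nlinarith [sq_nonneg (ε * ‖v‖ - 2 * C * ‖L‖ * |z|)]
  have hmargin : ε / (2 * C) * (v ⬝ᵥ Q *ᵥ v) ≤ ε / 2 * ‖v‖ ^ 2 := by
    calc ε / (2 * C) * (v ⬝ᵥ Q *ᵥ v) ≤ ε / (2 * C) * (C * ‖v‖ * ‖v‖) := by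
          gcongr; exact (le_abs_self _).trans (hQC v v)
      _ = ε / 2 * ‖v‖ ^ 2 := by field_simp
  linarith [hP v]

theorem dotProduct_mulVec_le_of_dissipation {δ η K C₀ : ℝ} {F Q : Matrix n n ℝ} {L : n → ℝ}
    (hη : 0 < η) (hK : 0 ≤ K) (hQ : Q.PosSemidef)
    (hdiss : ∀ v z, (F *ᵥ v + z • L) ⬝ᵥ Q *ᵥ v + v ⬝ᵥ Q *ᵥ (F *ᵥ v + z • L) ≤
      -(2 * δ + η) * (v ⬝ᵥ Q *ᵥ v) + K * z ^ 2)
    {e : ℝ → n → ℝ} {ζ : ℝ → ℝ} (he : ∀ t, 0 ≤ t → HasDerivAt e (F *ᵥ e t + ζ t • L) t)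
    (hζ : ∀ t, 0 ≤ t → |ζ t| ≤ C₀ * exp (-δ * t)) {t : ℝ} (ht : 0 ≤ t) :
    e t ⬝ᵥ Q *ᵥ e t ≤ exp (-(2 * δ) * t) * (e 0 ⬝ᵥ Q *ᵥ e 0 + K / η * C₀ ^ 2) := by
  have hζsq : ∀ s, 0 ≤ s → ζ s ^ 2 ≤ C₀ ^ 2 * exp (-(2 * δ) * s) := fun s hs => by
    calc ζ s ^ 2 = |ζ s| ^ 2 := (sq_abs _).symm
      _ ≤ (C₀ * exp (-δ * s)) ^ 2 := by gcongr; exact hζ s hs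
      _ = C₀ ^ 2 * exp (-(2 * δ) * s) := by rw [mul_pow, ← exp_nat_mul]; ring_nf
  have hV := le_of_hasDerivAt_le_neg_mul_add_mul_exp (V := fun s => e s ⬝ᵥ Q *ᵥ e s)
    (a := 2 * δ + η) (γ := 2 * δ) (b := K * C₀ ^ 2) (by linarith)
    (fun s hs => (he s hs).dotProduct ((he s hs).mulVec Q))
    (fun s hs => (hdiss _ _).trans (by rw [mul_assoc K]; gcongr; exact hζsq s hs)) ht
  rw [add_sub_cancel_left] at hV
  have hexp : exp (-(2 * δ + η) * t) ≤ exp (-(2 * δ) * t) := exp_le_exp.2 (by nlinarith)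
  have hV0 : 0 ≤ e 0 ⬝ᵥ Q *ᵥ e 0 := by simpa using hQ.dotProduct_mulVec_nonneg (e 0)
  have hc : 0 ≤ K * C₀ ^ 2 / η := by positivity
  linear_combination hV + mul_le_mul_of_nonneg_right hexp hV0 +
    mul_nonneg hc (exp_pos (-(2 * δ + η) * t)).le

end Lyapunov

theorem stmt8_general (N : ℕ) (δ : ℝ)
    (F : Matrix (Fin (N + 1)) (Fin (N + 1)) ℝ) (L : Fin (N + 1) → ℝ)
    (Q : Matrix (Fin (N + 1)) (Fin (N + 1)) ℝ) (hQ : Q.PosDef)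
    (hLyap : (-(Q * F + Fᵀ * Q + (2 * δ) • Q)).PosDef) :
    ∃ M > 0, ∀ C₀ : ℝ, 0 ≤ C₀ →
      ∀ (e : ℝ → (Fin (N + 1) → ℝ)) (ζ : ℝ → ℝ),
        ContinuousOn ζ (Set.Ici 0) →
        (∀ t, 0 ≤ t → HasDerivAt e (F.mulVec (e t) + ζ t • L) t) →
        (∀ t, 0 ≤ t → |ζ t| ≤ C₀ * Real.exp (-δ * t)) →
        ∀ t, 0 ≤ t → ‖e t‖ ≤ M * Real.exp (-δ * t) * (‖e 0‖ + C₀) := by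
  obtain ⟨m, hm, hQm⟩ := hQ.exists_pos_mul_sq_norm_le
  obtain ⟨C, hC, hQC⟩ := Q.exists_pos_abs_dotProduct_mulVec_le
  obtain ⟨η, hη, K, hK, hdiss⟩ := exists_dissipation_bound_of_lyapunov L hC hQC hLyap
  set Λ := max C (K / η)
  have hΛ : 0 ≤ Λ := hC.le.trans (le_max_left _ _)
  refine ⟨√(Λ / m), by positivity, fun C₀ hC₀ e ζ _ he hζ t ht => ?_⟩
  have hV := dotProduct_mulVec_le_of_dissipation hη hK hQ.posSemidef hdiss he hζ ht
  have hV0 : e 0 ⬝ᵥ Q *ᵥ e 0 ≤ Λ * ‖e 0‖ ^ 2 := by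
    nlinarith [(le_abs_self _).trans (hQC (e 0) (e 0)), le_max_left C (K / η)]
  refine le_of_pow_le_pow_left₀ two_ne_zero (by positivity) ?_
  rw [← mul_le_mul_iff_of_pos_left hm]
  calc m * ‖e t‖ ^ 2 ≤ e t ⬝ᵥ Q *ᵥ e t := hQm _
    _ ≤ exp (-(2 * δ) * t) * (Λ * ‖e 0‖ ^ 2 + Λ * C₀ ^ 2) :=
      hV.trans (by gcongr; exact le_max_right _ _)
    _ ≤ exp (-(2 * δ) * t) * (Λ * (‖e 0‖ + C₀) ^ 2) := by
      gcongr
      nlinarith [mul_nonneg hΛ (mul_nonneg (norm_nonneg (e 0)) hC₀)]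
    _ = m * (√(Λ / m) * exp (-δ * t) * (‖e 0‖ + C₀)) ^ 2 := by
      rw [mul_pow, mul_pow, sq_sqrt (by positivity), ← exp_nat_mul]
      field_simp
      ring_nf

/-- decay of a linear finite-dimensional system `ė = Fe + Lζ` driven by an
exponentially decaying signal `ζ`, given a symmetric positive-definite Lyapunov matrix `Q`
with `QF + FᵀQ + 2δQ` negative definite: `|e(t)| ≤ M e^{-δt}(|e(0)| + C₀)` with `M`
depending only on `N, δ, F, L, Q`. -/
theorem stmt8 (N : ℕ) (δ : ℝ) (hδ : 0 < δ)
    (F : Matrix (Fin (N + 1)) (Fin (N + 1)) ℝ) (L : Fin (N + 1) → ℝ)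
    (Q : Matrix (Fin (N + 1)) (Fin (N + 1)) ℝ) (hQ : Q.PosDef)
    (hLyap : (-(Q * F + Fᵀ * Q + (2 * δ) • Q)).PosDef) :
    ∃ M > 0, ∀ C₀ : ℝ, 0 ≤ C₀ →
      ∀ (e : ℝ → (Fin (N + 1) → ℝ)) (ζ : ℝ → ℝ),
        ContinuousOn ζ (Set.Ici 0) →
        (∀ t, 0 ≤ t → HasDerivAt e (F.mulVec (e t) + ζ t • L) t) →
        (∀ t, 0 ≤ t → |ζ t| ≤ C₀ * Real.exp (-δ * t)) →
        ∀ t, 0 ≤ t → ‖e t‖ ≤ M * Real.exp (-δ * t) * (‖e 0‖ + C₀) :=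
  stmt8_general N δ F L Q hQ hLyap
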